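/- arXiv:2110.00446 — 8 statements merged into one kernel-verified Lean document; each statement's English description precedes it below -/
import Mathlib

section
/- Left adjoint functors preserve initial algebras: if F : D → C has a right adjoint, E : C → C and E' : D → D are endofunctors with a natural isomorphism γ : E ∘ F ≅ F ∘ E', and (μE', ind_{E'}) is the initial E'-algebra, then (F(μE'), F(ind_{E'}) ∘ γ_{μE'}) is an initial E-algebra. -/
/-!
Left adjoint functors preserve initial algebras: if `F : D ⥤ C` has a right adjoint,
`E : C ⥤ C` and `E' : D ⥤ D` are endofunctors with a natural isomorphism
`γ : E ∘ F ≅ F ∘ E'`, and `(μE', ind_{E'})` is the initial `E'`-algebra, then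
`(F(μE'), F(ind_{E'}) ∘ γ_{μE'})` is an initial `E`-algebra.
-/

universe v₁ v₂ u₁ u₂

open CategoryTheory CategoryTheory.Limits

theorem left_adjoints_preserve_initial_algebras
    {C : Type u₁} [Category.{v₁} C] {D : Type u₂} [Category.{v₂} D]
    (F : D ⥤ C) [F.IsLeftAdjoint] (E : C ⥤ C) (E' : D ⥤ D)
    (γ : F ⋙ E ≅ E' ⋙ F) (μ : Endofunctor.Algebra E') (hμ : IsInitial μ) :
    Nonempty (IsInitial
      (⟨F.obj μ.a, γ.hom.app μ.a ≫ F.map μ.str⟩ : Endofunctor.Algebra E)) := by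
  set G := F.rightAdjoint
  let adj : F ⊣ G := Adjunction.ofIsLeftAdjoint F
  -- send an E-algebra A to an E'-algebra on G A.a
  let Φ : Endofunctor.Algebra E → Endofunctor.Algebra E' := fun A =>
    ⟨G.obj A.a, adj.homEquiv _ _ (γ.inv.app (G.obj A.a) ≫ E.map (adj.counit.app A.a) ≫ A.str)⟩
  -- key equivalence of hom conditions
  have key : ∀ (A : Endofunctor.Algebra E) (g : F.obj μ.a ⟶ A.a),
      (E.map g ≫ A.str = γ.hom.app μ.a ≫ F.map μ.str ≫ g) ↔
      (E'.map (adj.homEquiv _ _ g) ≫ (Φ A).str = μ.str ≫ adj.homEquiv _ _ g) := by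
    intro A g
    rw [← Equiv.apply_eq_iff_eq (adj.homEquiv _ _).symm]
    rw [adj.homEquiv_naturality_left_symm, adj.homEquiv_naturality_left_symm,
      Equiv.symm_apply_apply, Equiv.symm_apply_apply]
    have nat : F.map (E'.map ((adj.homEquiv μ.a A.a) g)) ≫ γ.inv.app (G.obj A.a)
        = γ.inv.app μ.a ≫ E.map (F.map ((adj.homEquiv μ.a A.a) g)) := by
      simpa using γ.inv.naturality ((adj.homEquiv μ.a A.a) g)
    have hg : F.map ((adj.homEquiv μ.a A.a) g) ≫ adj.counit.app A.a = g := by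
      have := (adj.homEquiv μ.a A.a).symm_apply_apply g
      rwa [Adjunction.homEquiv_counit] at this
    rw [reassoc_of% nat, ← E.map_comp_assoc, hg]
    constructor
    · intro h
      rw [h]
      simp
    · intro h
      rw [← h]
      simp
  refine ⟨IsInitial.ofUniqueHom (fun A => ?_) (fun A m => ?_)⟩
  · refine ⟨(adj.homEquiv _ _).symm (hμ.to (Φ A)).f, ?_⟩
    have := (key A ((adj.homEquiv _ _).symm (hμ.to (Φ A)).f)).mpr
    simp only [Equiv.apply_symm_apply] at this
    rw [this (hμ.to (Φ A)).h, Category.assoc]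
  · ext
    have hm : E'.map (adj.homEquiv _ _ m.f) ≫ (Φ A).str = μ.str ≫ adj.homEquiv _ _ m.f :=
      (key A m.f).mp (by simp [m.h])
    have : (⟨adj.homEquiv _ _ m.f, hm⟩ : μ ⟶ Φ A) = hμ.to (Φ A) := hμ.hom_ext _ _
    have h2 : adj.homEquiv _ _ m.f = (hμ.to (Φ A)).f := congrArg Endofunctor.Algebra.Hom.f this
    show m.f = _
    rw [← (adj.homEquiv _ _).symm_apply_apply m.f, h2]
end

section
/- Given an adjunction F ⊣ G with counit ε and unit η, and a natural isomorphism β : G ∘ E ≅ E' ∘ G between composites of endofunctors E on the domain of G and E' on its codomain, the induced functor G̃ : E-Coalg → E'-Coalg, (W,ξ) ↦ (G(W), β_W ∘ G(ξ)), has a left adjoint F̂ : E'-Coalg → E-Coalg given on objects by (W, ζ) ↦ (F(W), ε_{EF(W)} ∘ F(β⁻¹_{F(W)}) ∘ F E'(η_W) ∘ F(ζ)). -/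
/-!
Given an adjunction `F ⊣ G` with counit `ε` and unit `η`, and a natural isomorphism
`β : G ∘ E ≅ E' ∘ G` between composites of endofunctors `E` on the domain of `G` and `E'` on
its codomain, the induced functor `G̃ : E-Coalg ⥤ E'-Coalg`, `(W, ξ) ↦ (G W, β_W ∘ G ξ)`,
has a left adjoint `F̂ : E'-Coalg ⥤ E-Coalg` given on objects by
`(W, ζ) ↦ (F W, ε_{EF(W)} ∘ F(β⁻¹_{F W}) ∘ F E'(η_W) ∘ F ζ)`.
-/

universe v₁ v₂ u₁ u₂

open CategoryTheory CategoryTheory.Limits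

variable {C : Type u₁} [Category.{v₁} C] {D : Type u₂} [Category.{v₂} D]
variable {F : D ⥤ C} {G : C ⥤ D}

/-- The induced functor `G̃ : E-Coalg ⥤ E'-Coalg`, `(W, ξ) ↦ (G W, β_W ∘ G ξ)`. -/
def coalgebraPushforward (G : C ⥤ D) (E : C ⥤ C) (E' : D ⥤ D) (β : E ⋙ G ≅ G ⋙ E') :
    Endofunctor.Coalgebra E ⥤ Endofunctor.Coalgebra E' where
  obj V := ⟨G.obj V.V, G.map V.str ≫ β.hom.app V.V⟩
  map {V₁ V₂} f :=
    { f := G.map f.f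
      h := by
        have hn := β.hom.naturality f.f
        simp only [Functor.comp_map] at hn
        dsimp
        rw [Category.assoc, ← hn, ← Functor.map_comp_assoc, f.h, Functor.map_comp_assoc] }

/-- The left adjoint `F̂ : E'-Coalg ⥤ E-Coalg`,
`(W, ζ) ↦ (F W, ε_{EF(W)} ∘ F(β⁻¹_{F W}) ∘ F E'(η_W) ∘ F ζ)`. -/
def coalgebraPullback (adj : F ⊣ G) (E : C ⥤ C) (E' : D ⥤ D) (β : E ⋙ G ≅ G ⋙ E') :
    Endofunctor.Coalgebra E' ⥤ Endofunctor.Coalgebra E where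
  obj W := ⟨F.obj W.V,
    F.map W.str ≫ F.map (E'.map (adj.unit.app W.V)) ≫ F.map (β.inv.app (F.obj W.V)) ≫
      adj.counit.app (E.obj (F.obj W.V))⟩
  map {W₁ W₂} f :=
    { f := F.map f.f
      h := by
        have hβ := β.inv.naturality (F.map f.f)
        simp only [Functor.comp_map] at hβ
        have hη := adj.unit.naturality f.f
        simp only [Functor.comp_map, Functor.id_map] at hη
        have hε := adj.counit.naturality (E.map (F.map f.f))
        simp only [Functor.comp_map, Functor.id_map] at hε
        dsimp
        simp only [Category.assoc]
        rw [← hε]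
        simp only [← Functor.map_comp_assoc]
        congr 1
        congr 1
        rw [← hβ, ← E'.map_comp_assoc, ← hη, E'.map_comp_assoc, reassoc_of% f.h] }

/-! The unit `η` and counit `ε` of `F ⊣ G` are already morphisms of coalgebras
`W ⟶ G̃ F̂ W` and `F̂ G̃ V ⟶ V`; since morphisms of coalgebras are determined by their
underlying maps, naturality and the triangle identities are inherited from `F ⊣ G`. -/

open Endofunctor

section

variable (adj : F ⊣ G) (E : C ⥤ C) (E' : D ⥤ D) (β : E ⋙ G ≅ G ⋙ E')

def coalgebraPullbackUnit :
    𝟭 (Coalgebra E') ⟶ coalgebraPullback adj E E' β ⋙ coalgebraPushforward G E E' β where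
  app W :=
    { f := adj.unit.app W.V
      h := by simp [coalgebraPullback, coalgebraPushforward] }
  naturality _ _ f := Coalgebra.ext (adj.unit.naturality f.f)

def coalgebraPullbackCounit :
    coalgebraPushforward G E E' β ⋙ coalgebraPullback adj E E' β ⟶ 𝟭 (Coalgebra E) where
  app V :=
    { f := adj.counit.app V.V
      h := by
        have hβ : β.inv.app (F.obj (G.obj V.V)) ≫ G.map (E.map (adj.counit.app V.V)) =
            E'.map (G.map (adj.counit.app V.V)) ≫ β.inv.app V.V :=
          (β.inv.naturality (adj.counit.app V.V)).symm
        calc _ = F.map (G.map V.str ≫ β.hom.app V.V ≫ E'.map (adj.unit.app (G.obj V.V)) ≫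
                β.inv.app (F.obj (G.obj V.V)) ≫ G.map (E.map (adj.counit.app V.V))) ≫
                adj.counit.app (E.obj V.V) := by
              simp [coalgebraPullback, coalgebraPushforward]
          _ = F.map (G.map V.str ≫ β.hom.app V.V ≫
                E'.map (adj.unit.app (G.obj V.V) ≫ G.map (adj.counit.app V.V)) ≫
                β.inv.app V.V) ≫ adj.counit.app (E.obj V.V) := by
              rw [hβ, E'.map_comp_assoc]
          _ = F.map (G.map V.str) ≫ adj.counit.app (E.obj V.V) := by simp
          _ = adj.counit.app V.V ≫ V.str := adj.counit_naturality V.str }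
  naturality _ _ f := Coalgebra.ext (adj.counit.naturality f.f)

end

theorem coalgebraPullback_left_adjoint_of_coalgebraPushforward
    (adj : F ⊣ G) (E : C ⥤ C) (E' : D ⥤ D) (β : E ⋙ G ≅ G ⋙ E') :
    Nonempty (coalgebraPullback adj E E' β ⊣ coalgebraPushforward G E E' β) :=
  ⟨{ unit := coalgebraPullbackUnit adj E E' β
     counit := coalgebraPullbackCounit adj E E' β
     left_triangle_components := fun W => Coalgebra.ext (adj.left_triangle_components W.V)
     right_triangle_components := fun V => Coalgebra.ext (adj.right_triangle_components V.V) }⟩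
end

section
/- Monadic functors create terminal coalgebras: if G : C → D is monadic, E : C → C and E' : D → D are endofunctors with a natural isomorphism β : G ∘ E ≅ E' ∘ G, and the terminal E'-coalgebra exists, then the terminal E-coalgebra exists, is preserved by G, and any E-coalgebra sent by G to a terminal E'-coalgebra is itself terminal. -/
/-!
Monadic functors create terminal coalgebras: if `G : C ⥤ D` is monadic, `E : C ⥤ C` and
`E' : D ⥤ D` are endofunctors with a natural isomorphism `β : G ∘ E ≅ E' ∘ G`, and the
terminal `E'`-coalgebra exists, then the terminal `E`-coalgebra exists, is preserved by `G`,
and any `E`-coalgebra sent by `G` to a terminal `E'`-coalgebra is itself terminal.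
-/

universe v₁ v₂ u₁ u₂

open CategoryTheory CategoryTheory.Limits CategoryTheory.Endofunctor

namespace MonCreateTC

variable {C : Type u₁} [Category.{v₁} C] {D : Type u₂} [Category.{v₂} D]
variable {F : D ⥤ C} {G : C ⥤ D} (adj : F ⊣ G)
variable (E : C ⥤ C) (E' : D ⥤ D) (β : E ⋙ G ≅ G ⋙ E')

lemma counit_nat {X Y : C} (f : X ⟶ Y) :
    F.map (G.map f) ≫ adj.counit.app Y = adj.counit.app X ≫ f := by
  simpa using adj.counit_naturality f

lemma unit_nat {X Y : D} (f : X ⟶ Y) :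
    adj.unit.app X ≫ G.map (F.map f) = f ≫ adj.unit.app Y := by
  simpa using adj.unit_naturality f

/-- naturality of β, components -/
lemma beta_nat {A B : C} (f : A ⟶ B) :
    G.map (E.map f) ≫ β.hom.app B = β.hom.app A ≫ E'.map (G.map f) := by
  simpa using β.hom.naturality f

lemma beta_inv_nat {A B : C} (f : A ⟶ B) :
    E'.map (G.map f) ≫ β.inv.app B = β.inv.app A ≫ G.map (E.map f) := by
  simpa using β.inv.naturality f

/-- The mate `F E' ⟶ E F` of `β⁻¹`. -/
def gam (Y : D) : F.obj (E'.obj Y) ⟶ E.obj (F.obj Y) :=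
  F.map (E'.map (adj.unit.app Y)) ≫ F.map (β.inv.app (F.obj Y)) ≫
    adj.counit.app (E.obj (F.obj Y))

lemma gam_nat {Y Z : D} (h : Y ⟶ Z) :
    F.map (E'.map h) ≫ gam adj E E' β Z = gam adj E E' β Y ≫ E.map (F.map h) := by
  unfold gam
  rw [← F.map_comp_assoc, ← E'.map_comp, ← unit_nat adj h, E'.map_comp,
    F.map_comp_assoc, ← F.map_comp_assoc (E'.map (G.map (F.map h))),
    beta_inv_nat E E' β (F.map h), F.map_comp, Category.assoc, counit_nat adj]
  simp

/-- mate identity (I1) -/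
lemma gam_counit (X : C) :
    gam adj E E' β (G.obj X) ≫ E.map (adj.counit.app X) =
      F.map (β.inv.app X) ≫ adj.counit.app (E.obj X) := by
  unfold gam
  have h1 : adj.counit.app (E.obj (F.obj (G.obj X))) ≫ E.map (adj.counit.app X) =
      F.map (G.map (E.map (adj.counit.app X))) ≫ adj.counit.app (E.obj X) := by
    simpa using (counit_nat adj (E.map (adj.counit.app X))).symm
  have h2 : E'.map (G.map (adj.counit.app X)) ≫ β.inv.app X =
      β.inv.app (F.obj (G.obj X)) ≫ G.map (E.map (adj.counit.app X)) := by
    simpa using beta_inv_nat E E' β (adj.counit.app X)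
  have h3 : adj.unit.app (G.obj X) ≫ G.map (adj.counit.app X) = 𝟙 (G.obj X) := by
    simpa using adj.right_triangle_components X
  rw [Category.assoc, Category.assoc, h1, ← Category.assoc (F.map (β.inv.app (F.obj (G.obj X)))),
    ← F.map_comp, ← h2, F.map_comp, ← Category.assoc, ← Category.assoc,
    ← F.map_comp, ← E'.map_comp, h3, E'.map_id, F.map_id]
  simp

/-- The distributive law `T E' ⟶ E' T`, `T = F ⋙ G`. -/
def dl (Y : D) : G.obj (F.obj (E'.obj Y)) ⟶ E'.obj (G.obj (F.obj Y)) :=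
  G.map (gam adj E E' β Y) ≫ β.hom.app (F.obj Y)

lemma dl_nat {Y Z : D} (h : Y ⟶ Z) :
    G.map (F.map (E'.map h)) ≫ dl adj E E' β Z =
      dl adj E E' β Y ≫ E'.map (G.map (F.map h)) := by
  unfold dl
  rw [← Category.assoc, ← G.map_comp, gam_nat, G.map_comp, Category.assoc,
    beta_nat E E' β (F.map h), Category.assoc]

/-- unit law (I2) -/
lemma unit_dl (Y : D) :
    adj.unit.app (E'.obj Y) ≫ dl adj E E' β Y = E'.map (adj.unit.app Y) := by
  unfold dl gam
  have h1 : adj.unit.app (E'.obj Y) ≫ G.map (F.map (E'.map (adj.unit.app Y))) =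
      E'.map (adj.unit.app Y) ≫ adj.unit.app (E'.obj (G.obj (F.obj Y))) := by
    simpa using unit_nat adj (E'.map (adj.unit.app Y))
  have h2 : adj.unit.app (E'.obj (G.obj (F.obj Y))) ≫ G.map (F.map (β.inv.app (F.obj Y))) =
      β.inv.app (F.obj Y) ≫ adj.unit.app (G.obj (E.obj (F.obj Y))) := by
    simpa using unit_nat adj (β.inv.app (F.obj Y))
  have h3 : adj.unit.app (G.obj (E.obj (F.obj Y))) ≫ G.map (adj.counit.app (E.obj (F.obj Y))) =
      𝟙 _ := by simpa using adj.right_triangle_components (E.obj (F.obj Y))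
  rw [G.map_comp, G.map_comp]
  simp only [Category.assoc]
  rw [reassoc_of% h1, reassoc_of% h2]
  simp [reassoc_of% h3]

/-- (I3) -/
lemma dl_counit (X : C) :
    dl adj E E' β (G.obj X) ≫ E'.map (G.map (adj.counit.app X)) =
      G.map (F.map (β.inv.app X)) ≫ G.map (adj.counit.app (E.obj X)) ≫ β.hom.app X := by
  unfold dl
  have h1 : G.map (E.map (adj.counit.app X)) ≫ β.hom.app X =
      β.hom.app (F.obj (G.obj X)) ≫ E'.map (G.map (adj.counit.app X)) := by
    simpa using beta_nat E E' β (adj.counit.app X)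
  rw [Category.assoc, ← h1, ← Category.assoc, ← G.map_comp, gam_counit, G.map_comp,
    Category.assoc]

/-- β-naturality: `G` of a coalgebra hom is a hom of image coalgebras. -/
lemma gbar_hom_cond {ν₁ ν₂ : Coalgebra E} (m : ν₁ ⟶ ν₂) :
    (G.map ν₁.str ≫ β.hom.app ν₁.V) ≫ E'.map (G.map m.f) =
      G.map m.f ≫ (G.map ν₂.str ≫ β.hom.app ν₂.V) := by
  rw [Category.assoc, ← beta_nat E E' β m.f, ← Category.assoc, ← G.map_comp, m.h, G.map_comp,
    Category.assoc]

/-- `T` of a coalgebra hom is a hom of lifted coalgebras. -/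
lemma tlift_hom_cond {A B : D} (sA : A ⟶ E'.obj A) (sB : B ⟶ E'.obj B) (w : A ⟶ B)
    (hw : sA ≫ E'.map w = w ≫ sB) :
    (G.map (F.map sA) ≫ dl adj E E' β A) ≫ E'.map (G.map (F.map w)) =
      G.map (F.map w) ≫ (G.map (F.map sB) ≫ dl adj E E' β B) := by
  rw [Category.assoc, ← dl_nat adj E E' β w, ← Category.assoc, ← G.map_comp, ← F.map_comp, hw,
    F.map_comp, G.map_comp, Category.assoc]

/-- `G ε` is a hom from the lifted coalgebra of an image coalgebra to it. -/
lemma eps_hom_cond (X : C) (f : X ⟶ E.obj X) (s : G.obj X ⟶ E'.obj (G.obj X))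
    (hs : s = G.map f ≫ β.hom.app X) :
    (G.map (F.map s) ≫ dl adj E E' β (G.obj X)) ≫ E'.map (G.map (adj.counit.app X)) =
      G.map (adj.counit.app X) ≫ s := by
  subst hs
  rw [Category.assoc, dl_counit adj E E' β X]
  have h1 : G.map (F.map (G.map f)) ≫ G.map (adj.counit.app (E.obj X)) =
      G.map (adj.counit.app X) ≫ G.map f := by
    rw [← G.map_comp, ← G.map_comp]
    exact congrArg G.map (by simpa using counit_nat adj f)
  rw [F.map_comp, G.map_comp, Category.assoc, ← Category.assoc (G.map (F.map (β.hom.app X))),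
    ← G.map_comp, ← F.map_comp]
  simp only [Iso.hom_inv_id_app]
  rw [F.map_id, G.map_id, Category.id_comp, ← Category.assoc, ← Category.assoc, h1]

/-- the unit is a coalgebra hom into the lifted coalgebra. -/
lemma unit_hom_cond {Y : D} (g : Y ⟶ E'.obj Y) :
    g ≫ E'.map (adj.unit.app Y) =
      adj.unit.app Y ≫ (G.map (F.map g) ≫ dl adj E E' β Y) := by
  conv_rhs => rw [← Category.assoc, unit_nat adj g, Category.assoc, unit_dl adj E E' β Y]

section Monadic

variable (G : C ⥤ D) [MonadicRightAdjoint G] (E : C ⥤ C) (E' : D ⥤ D)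
variable (β : E ⋙ G ≅ G ⋙ E')

lemma part3 (ν : Coalgebra E)
    (hν : IsTerminal (⟨G.obj ν.V, G.map ν.str ≫ β.hom.app ν.V⟩ : Coalgebra E')) :
    Nonempty (IsTerminal ν) := by
  classical
  haveI : G.Faithful := Functor.Faithful.of_iso (Monad.comparisonForget (monadicAdjunction G))
  have lift : ∀ X : Coalgebra E, ∃ mX : X ⟶ ν, ∀ m : X ⟶ ν, m = mX := by
    intro X
    -- the image coalgebra of X and the terminal one
    set GX : Coalgebra E' := ⟨G.obj X.V, G.map X.str ≫ β.hom.app X.V⟩ with hGX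
    set Gν : Coalgebra E' := ⟨G.obj ν.V, G.map ν.str ≫ β.hom.app ν.V⟩ with hGν
    let w : GX ⟶ Gν := hν.from GX
    -- lifted coalgebras
    set LX : Coalgebra E' := ⟨G.obj ((monadicLeftAdjoint G).obj (G.obj X.V)),
      G.map ((monadicLeftAdjoint G).map GX.str) ≫
        dl (monadicAdjunction G) E E' β (G.obj X.V)⟩ with hLX
    set Lν : Coalgebra E' := ⟨G.obj ((monadicLeftAdjoint G).obj (G.obj ν.V)),
      G.map ((monadicLeftAdjoint G).map Gν.str) ≫
        dl (monadicAdjunction G) E E' β (G.obj ν.V)⟩ with hLν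
    let epsX : LX ⟶ GX :=
      ⟨G.map ((monadicAdjunction G).counit.app X.V),
        eps_hom_cond (monadicAdjunction G) E E' β X.V X.str GX.str rfl⟩
    let epsν : Lν ⟶ Gν :=
      ⟨G.map ((monadicAdjunction G).counit.app ν.V),
        eps_hom_cond (monadicAdjunction G) E E' β ν.V ν.str Gν.str rfl⟩
    let tlw : LX ⟶ Lν :=
      ⟨G.map ((monadicLeftAdjoint G).map w.f),
        tlift_hom_cond (monadicAdjunction G) E E' β GX.str Gν.str w.f w.h⟩
    have e : G.map ((monadicAdjunction G).counit.app X.V) ≫ w.f =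
        G.map ((monadicLeftAdjoint G).map w.f) ≫
          G.map ((monadicAdjunction G).counit.app ν.V) := by
      exact congrArg Coalgebra.Hom.f (hν.hom_ext (epsX ≫ w) (tlw ≫ epsν))
    -- lift `w.f` through the comparison functor
    let aw : (Monad.comparison (monadicAdjunction G)).obj X.V ⟶
        (Monad.comparison (monadicAdjunction G)).obj ν.V := ⟨w.f, e.symm⟩
    let w' : X.V ⟶ ν.V := (Monad.comparison (monadicAdjunction G)).preimage aw
    have hw' : G.map w' = w.f :=
      congrArg Monad.Algebra.Hom.f
        ((Monad.comparison (monadicAdjunction G)).map_preimage aw)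
    have cond : X.str ≫ E.map w' = w' ≫ ν.str := by
      apply G.map_injective
      rw [← cancel_mono (β.hom.app ν.V), G.map_comp, G.map_comp, Category.assoc,
        Category.assoc, beta_nat E E' β w', hw', ← Category.assoc]
      have wh : (G.map X.str ≫ β.hom.app X.V) ≫ E'.map w.f =
          w.f ≫ (G.map ν.str ≫ β.hom.app ν.V) := w.h
      rw [wh]
    refine ⟨⟨w', cond⟩, ?_⟩
    intro m
    let gm : GX ⟶ Gν := ⟨G.map m.f, gbar_hom_cond E E' β m⟩
    have hm : gm = w := hν.hom_ext gm w
    have : G.map m.f = G.map w' := by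
      rw [hw']
      exact congrArg Coalgebra.Hom.f hm
    exact Coalgebra.Hom.ext (G.map_injective this)
  exact ⟨IsTerminal.ofUniqueHom (fun X => (lift X).choose)
    (fun X m => (lift X).choose_spec m)⟩

lemma exists_part1 (hT : ∃ T : Coalgebra E', Nonempty (IsTerminal T)) :
    ∃ ν : Coalgebra E, Nonempty (IsTerminal
      (⟨G.obj ν.V, G.map ν.str ≫ β.hom.app ν.V⟩ : Coalgebra E')) := by
  classical
  obtain ⟨Tc, ⟨ht⟩⟩ := hT
  -- the lifted coalgebra on `T (Tc.V)`
  let TY : Coalgebra E' := ⟨G.obj ((monadicLeftAdjoint G).obj Tc.V),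
    G.map ((monadicLeftAdjoint G).map Tc.str) ≫ dl (monadicAdjunction G) E E' β Tc.V⟩
  let aH : TY ⟶ Tc := ht.from TY
  -- `aH.f` is an Eilenberg-Moore algebra structure on `Tc.V` : unit law
  let unitHom : Tc ⟶ TY := ⟨(monadicAdjunction G).unit.app Tc.V,
    unit_hom_cond (monadicAdjunction G) E E' β Tc.str⟩
  have hu : (monadicAdjunction G).unit.app Tc.V ≫ aH.f = 𝟙 Tc.V :=
    congrArg Coalgebra.Hom.f (ht.hom_ext (unitHom ≫ aH) (𝟙 Tc))
  -- multiplication law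
  let S : Coalgebra E' := ⟨G.obj ((monadicLeftAdjoint G).obj TY.V),
    G.map ((monadicLeftAdjoint G).map TY.str) ≫ dl (monadicAdjunction G) E E' β TY.V⟩
  let muHom : S ⟶ TY :=
    ⟨G.map ((monadicAdjunction G).counit.app ((monadicLeftAdjoint G).obj Tc.V)),
      eps_hom_cond (monadicAdjunction G) E E' β ((monadicLeftAdjoint G).obj Tc.V)
        ((monadicLeftAdjoint G).map Tc.str ≫ gam (monadicAdjunction G) E E' β Tc.V) TY.str
        (by simp [TY, dl])⟩
  let tlH : S ⟶ TY := ⟨G.map ((monadicLeftAdjoint G).map aH.f),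
    tlift_hom_cond (monadicAdjunction G) E E' β TY.str Tc.str aH.f aH.h⟩
  have hmu : G.map ((monadicAdjunction G).counit.app ((monadicLeftAdjoint G).obj Tc.V)) ≫ aH.f =
      G.map ((monadicLeftAdjoint G).map aH.f) ≫ aH.f :=
    congrArg Coalgebra.Hom.f (ht.hom_ext (muHom ≫ aH) (tlH ≫ aH))
  -- the Eilenberg-Moore algebra
  let AlgY : (monadicAdjunction G).toMonad.Algebra :=
    { A := Tc.V, a := aH.f, unit := hu, assoc := hmu }
  let K := Monad.comparison (monadicAdjunction G)
  let Tobj : C := K.asEquivalence.inverse.obj AlgY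
  let ρ : K.obj Tobj ≅ AlgY := K.asEquivalence.counitIso.app AlgY
  let jh : G.obj Tobj ⟶ Tc.V := ρ.hom.f
  let jinv : Tc.V ⟶ G.obj Tobj := ρ.inv.f
  have hji : jh ≫ jinv = 𝟙 (G.obj Tobj) := congrArg Monad.Algebra.Hom.f ρ.hom_inv_id
  have hij : jinv ≫ jh = 𝟙 Tc.V := congrArg Monad.Algebra.Hom.f ρ.inv_hom_id
  have jh_h : G.map ((monadicLeftAdjoint G).map jh) ≫ aH.f =
      G.map ((monadicAdjunction G).counit.app Tobj) ≫ jh := ρ.hom.h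
  have jinv_h : G.map ((monadicLeftAdjoint G).map jinv) ≫
      G.map ((monadicAdjunction G).counit.app Tobj) = aH.f ≫ jinv := ρ.inv.h
  have haH : (G.map ((monadicLeftAdjoint G).map Tc.str) ≫
      dl (monadicAdjunction G) E E' β Tc.V) ≫ E'.map aH.f = aH.f ≫ Tc.str := aH.h
  -- the candidate structure map, downstairs
  have mcond : G.map ((monadicLeftAdjoint G).map
        (jh ≫ Tc.str ≫ E'.map jinv ≫ β.inv.app Tobj)) ≫
      G.map ((monadicAdjunction G).counit.app (E.obj Tobj)) =
      G.map ((monadicAdjunction G).counit.app Tobj) ≫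
        (jh ≫ Tc.str ≫ E'.map jinv ≫ β.inv.app Tobj) := by
    have step1 : G.map ((monadicLeftAdjoint G).map (β.inv.app Tobj)) ≫
        G.map ((monadicAdjunction G).counit.app (E.obj Tobj)) =
        dl (monadicAdjunction G) E E' β (G.obj Tobj) ≫
          E'.map (G.map ((monadicAdjunction G).counit.app Tobj)) ≫ β.inv.app Tobj := by
      rw [← Category.assoc, dl_counit]
      simp
    simp only [Functor.map_comp, Category.assoc]
    rw [step1, reassoc_of% (dl_nat (monadicAdjunction G) E E' β jinv),
      ← E'.map_comp_assoc (G.map ((monadicLeftAdjoint G).map jinv)), jinv_h,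
      E'.map_comp_assoc, reassoc_of% haH, reassoc_of% jh_h]
  let mAlg : K.obj Tobj ⟶ K.obj (E.obj Tobj) :=
    ⟨jh ≫ Tc.str ≫ E'.map jinv ≫ β.inv.app Tobj, mcond⟩
  let t : Tobj ⟶ E.obj Tobj := K.preimage mAlg
  have hGt : G.map t = jh ≫ Tc.str ≫ E'.map jinv ≫ β.inv.app Tobj :=
    congrArg Monad.Algebra.Hom.f (K.map_preimage mAlg)
  have wcond : ((⟨G.obj Tobj, G.map t ≫ β.hom.app Tobj⟩ : Coalgebra E').str) ≫ E'.map jh =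
      jh ≫ Tc.str := by
    show (G.map t ≫ β.hom.app Tobj) ≫ E'.map jh = jh ≫ Tc.str
    rw [hGt]
    simp only [Category.assoc, Iso.inv_hom_id_app_assoc]
    rw [← E'.map_comp, hij, E'.map_id, Category.comp_id]
  exact ⟨⟨Tobj, t⟩,
    ⟨ht.ofIso ((Coalgebra.isoMk (V₀ := ⟨G.obj Tobj, G.map t ≫ β.hom.app Tobj⟩) (V₁ := Tc)
      ⟨jh, jinv, hji, hij⟩ wcond).symm)⟩⟩

lemma part2 (hT : ∃ T : Coalgebra E', Nonempty (IsTerminal T)) (ν : Coalgebra E)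
    (hν : IsTerminal ν) :
    Nonempty (IsTerminal (⟨G.obj ν.V, G.map ν.str ≫ β.hom.app ν.V⟩ : Coalgebra E')) := by
  obtain ⟨νT, ⟨hGT⟩⟩ := exists_part1 G E E' β hT
  obtain ⟨hνT⟩ := part3 G E E' β νT hGT
  let u : νT ≅ ν := hνT.uniqueUpToIso hν
  have h1 : u.hom.f ≫ u.inv.f = 𝟙 νT.V := congrArg Coalgebra.Hom.f u.hom_inv_id
  have h2 : u.inv.f ≫ u.hom.f = 𝟙 ν.V := congrArg Coalgebra.Hom.f u.inv_hom_id
  have hji : G.map u.hom.f ≫ G.map u.inv.f = 𝟙 (G.obj νT.V) := by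
    rw [← G.map_comp, h1, G.map_id]
  have hij : G.map u.inv.f ≫ G.map u.hom.f = 𝟙 (G.obj ν.V) := by
    rw [← G.map_comp, h2, G.map_id]
  exact ⟨hGT.ofIso (Coalgebra.isoMk (V₀ := ⟨G.obj νT.V, G.map νT.str ≫ β.hom.app νT.V⟩)
    (V₁ := ⟨G.obj ν.V, G.map ν.str ≫ β.hom.app ν.V⟩)
    ⟨G.map u.hom.f, G.map u.inv.f, hji, hij⟩ (gbar_hom_cond E E' β u.hom))⟩

end Monadic

end MonCreateTC


theorem monadic_functors_create_terminal_coalgebras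
    {C : Type u₁} [Category.{v₁} C] {D : Type u₂} [Category.{v₂} D]
    (G : C ⥤ D) [MonadicRightAdjoint G] (E : C ⥤ C) (E' : D ⥤ D)
    (β : E ⋙ G ≅ G ⋙ E')
    (hT : ∃ T : Endofunctor.Coalgebra E', Nonempty (IsTerminal T)) :
    (∃ ν : Endofunctor.Coalgebra E, Nonempty (IsTerminal ν)) ∧
    (∀ ν : Endofunctor.Coalgebra E, IsTerminal ν →
      Nonempty (IsTerminal
        (⟨G.obj ν.V, G.map ν.str ≫ β.hom.app ν.V⟩ : Endofunctor.Coalgebra E'))) ∧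
    (∀ ν : Endofunctor.Coalgebra E,
      Nonempty (IsTerminal
        (⟨G.obj ν.V, G.map ν.str ≫ β.hom.app ν.V⟩ : Endofunctor.Coalgebra E')) →
      Nonempty (IsTerminal ν)) := by
  refine ⟨?_, ?_, ?_⟩
  · obtain ⟨νT, ⟨hGT⟩⟩ := MonCreateTC.exists_part1 G E E' β hT
    exact ⟨νT, MonCreateTC.part3 G E E' β νT hGT⟩
  · exact fun ν hν => MonCreateTC.part2 G E E' β hT ν hν
  · exact fun ν h => h.elim fun hh => MonCreateTC.part3 G E E' β ν hh
end

section
/- For a functor G : C → D where D has binary products, the forgetful functor from the comma category D ↓ G (the scone of G) to D × C is comonadic. -/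
/-!
For a functor `G : C ⥤ D` where `D` has binary products, the forgetful functor from the
comma category `D ↓ G` (the scone of `G`) to `D × C` is comonadic.
-/

universe v₁ v₂ u₁ u₂

open CategoryTheory CategoryTheory.Limits

/-!
The forgetful functor `(Y, X, f) ↦ (Y, X)` has the right adjoint `(Y, X) ↦ (Y ⨯ G X, X, π₂)` and
reflects isomorphisms, so by Beck's theorem it suffices that it creates equalizers of cosplit
pairs. Limits in `D × C` are computed componentwise, and componentwise limits lift to the comma
category as soon as `G` preserves the limit of the `C`-component. For a cosplit pair that
component is a split equalizer, which every functor preserves.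
-/

universe w w' v₃ u₃

namespace CategoryTheory

section ProductLimits

variable {J : Type w} [Category.{w'} J] {B : Type u₁} [Category.{v₁} B]
  {C : Type u₂} [Category.{v₂} C]

def Prod.coneOfFstSnd {F : J ⥤ B × C} (c₁ : Cone (F ⋙ Prod.fst B C))
    (c₂ : Cone (F ⋙ Prod.snd B C)) : Cone F where
  pt := (c₁.pt, c₂.pt)
  π := { app j := (c₁.π.app j, c₂.π.app j)
         naturality _ _ u := Prod.ext (c₁.π.naturality u) (c₂.π.naturality u) }

instance Prod.preservesLimitsOfSize_fst : PreservesLimitsOfSize.{w', w} (Prod.fst B C) where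
  preservesLimitsOfShape.preservesLimit.preserves {c} t := ⟨{
    lift s := (t.lift (Prod.coneOfFstSnd s ((Prod.snd B C).mapCone c))).1
    fac _ j := congrArg _root_.Prod.fst (t.fac _ j)
    uniq s m hm := congrArg _root_.Prod.fst <|
      t.uniq (Prod.coneOfFstSnd s ((Prod.snd B C).mapCone c)) (m, 𝟙 c.pt.2)
        fun j => Prod.ext (hm j) (Category.id_comp _) }⟩

instance Prod.preservesLimitsOfSize_snd : PreservesLimitsOfSize.{w', w} (Prod.snd B C) :=
  haveI : (Prod.swap B C).IsEquivalence := (Prod.braiding B C).isEquivalence_functor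
  preservesLimits_of_natIso (F := Prod.swap B C ⋙ Prod.fst C B) (Iso.refl _)

end ProductLimits

namespace Comma

variable {A : Type u₁} [Category.{v₁} A] {B : Type u₂} [Category.{v₂} B]
  {T : Type u₃} [Category.{v₃} T] {L : A ⥤ T} {R : B ⥤ T}

instance reflectsIsomorphisms_fst_prod'_snd :
    ((fst L R).prod' (snd L R)).ReflectsIsomorphisms where
  reflects {X Y} e he := by
    obtain ⟨_, _⟩ : IsIso e.left ∧ IsIso e.right := (isIso_prod_iff A B).mp he
    exact (isoMk (asIso e.left) (asIso e.right) e.w).isIso_hom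

variable {J : Type w} [Category.{w'} J]

noncomputable instance createsLimit_fst_prod'_snd (K : J ⥤ Comma L R)
    [PreservesLimit (K ⋙ snd L R) R] :
    CreatesLimit K ((fst L R).prod' (snd L R)) :=
  createsLimitOfReflectsIso fun c t =>
    { liftedCone :=
        coneOfPreserves K ((Prod.fst A B).mapCone c) (isLimitOfPreserves (Prod.snd A B) t)
      validLift := Cone.ext (Iso.refl _)
        fun _ => Prod.ext (Category.id_comp _).symm (Category.id_comp _).symm
      makesLimit := coneOfPreservesIsLimit K (isLimitOfPreserves (Prod.fst A B) t) _ }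

noncomputable instance createsLimitOfIsCosplitPair_fst_prod'_snd :
    Comonad.CreatesLimitOfIsCosplitPair ((fst L R).prod' (snd L R)) where
  out f g _ :=
    haveI : HasSplitEqualizer ((parallelPair f g ⋙ snd L R).map .left)
        ((parallelPair f g ⋙ snd L R).map .right) :=
      inferInstanceAs (HasSplitEqualizer ((Prod.snd A B).map (((fst L R).prod' (snd L R)).map f))
        ((Prod.snd A B).map (((fst L R).prod' (snd L R)).map g)))
    haveI : PreservesLimit (parallelPair f g ⋙ snd L R) R :=
      preservesLimit_of_iso_diagram R (diagramIsoParallelPair _).symm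
    inferInstance

end Comma

section Scone

variable {C : Type u₁} [Category.{v₁} C] {D : Type u₂} [Category.{v₂} D]
  (G : C ⥤ D) [HasBinaryProducts D]

abbrev sconeForget : Comma (𝟭 D) G ⥤ D × C :=
  (Comma.fst (𝟭 D) G).prod' (Comma.snd (𝟭 D) G)

noncomputable abbrev sconeCofree : D × C ⥤ Comma (𝟭 D) G where
  obj P := { left := P.1 ⨯ G.obj P.2, right := P.2, hom := prod.snd }
  map k := { left := prod.map k.1 (G.map k.2), right := k.2 }

noncomputable def sconeHomEquiv (X : Comma (𝟭 D) G) (P : D × C) :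
    ((sconeForget G).obj X ⟶ P) ≃ (X ⟶ (sconeCofree G).obj P) where
  toFun k :=
    { left := prod.lift k.1 (X.hom ≫ G.map k.2), right := k.2, w := prod.lift_snd _ _ }
  invFun m := (m.left ≫ prod.fst, m.right)
  left_inv _ := Prod.ext (prod.lift_fst _ _) rfl
  right_inv m :=
    Comma.hom_ext _ _ (prod.hom_ext (prod.lift_fst _ _) ((prod.lift_snd _ _).trans m.w.symm)) rfl

noncomputable def sconeForgetAdjunction : sconeForget G ⊣ sconeCofree G :=
  Adjunction.mkOfHomEquiv
    { homEquiv := sconeHomEquiv G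
      homEquiv_naturality_left_symm _ _ := Prod.ext (Category.assoc _ _ _) rfl
      homEquiv_naturality_right _ _ := by ext <;> simp [sconeHomEquiv] }

end Scone

end CategoryTheory

theorem scone_forgetful_functor_comonadic
    {C : Type u₁} [Category.{v₁} C] {D : Type u₂} [Category.{v₂} D]
    (G : C ⥤ D) [HasBinaryProducts D] :
    Nonempty (ComonadicLeftAdjoint ((Comma.fst (𝟭 D) G).prod' (Comma.snd (𝟭 D) G))) :=
  ⟨Comonad.comonadicOfCreatesFSplitEqualizers (sconeForgetAdjunction G)⟩
end

section
/- If G : C → D is a monadic and comonadic functor and D is finitely complete and cartesian closed, then C is finitely complete and cartesian closed; moreover G reflects exponentiable objects, i.e., if G(W) is exponentiable in D then W is exponentiable in C. -/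
/-!
Monadic functors create limits, so `C` inherits finite limits from `D`. As a right adjoint, `G`
preserves binary products, so `W ⊗ - ⋙ G ≅ G ⋙ G(W) ⊗ -`, which is a left adjoint when `G(W)` is
exponentiable. Since `G` is comonadic and `C` has coreflexive equalizers, Dubuc's adjoint triangle
theorem lifts this to a right adjoint of `W ⊗ -`.
-/

universe v₁ v₂ u₁ u₂

open CategoryTheory CategoryTheory.Limits MonoidalCategory

section

variable {C : Type u₁} [Category.{v₁} C] {D : Type u₂} [Category.{v₂} D]

theorem hasFiniteLimits_of_monadic (G : C ⥤ D) [MonadicRightAdjoint G] [HasFiniteLimits D] :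
    HasFiniteLimits C :=
  have := monadicCreatesLimits G
  hasFiniteLimits_of_hasLimitsLimits_of_createsFiniteLimits G

variable [CartesianMonoidalCategory C] [CartesianMonoidalCategory D]

theorem isLeftAdjoint_tensorLeft_comp (G : C ⥤ D) [G.IsLeftAdjoint] (W : C)
    [∀ B, PreservesLimit (pair W B) G] [Closed (G.obj W)] :
    (tensorLeft W ⋙ G).IsLeftAdjoint :=
  ((Adjunction.ofIsLeftAdjoint G).comp (ihom.adjunction (G.obj W))).ofNatIsoLeft
    (CartesianMonoidalCategory.prodComparisonNatIso G W).symm |>.isLeftAdjoint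

@[reducible]
noncomputable def Closed.ofComonadic (G : C ⥤ D) [ComonadicLeftAdjoint G]
    [HasCoreflexiveEqualizers C] (W : C) [∀ B, PreservesLimit (pair W B) G]
    [Closed (G.obj W)] : Closed W :=
  have := isLeftAdjoint_tensorLeft_comp G W
  have := isLeftAdjoint_triangle_lift_comonadic G (L := tensorLeft W)
  .mk _ (Adjunction.ofIsLeftAdjoint (tensorLeft W))

end

theorem monadic_comonadic_reflects_cartesian_closed
    {C : Type u₁} [Category.{v₁} C] {D : Type u₂} [Category.{v₂} D]
    (G : C ⥤ D) [MonadicRightAdjoint G] [ComonadicLeftAdjoint G]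
    [HasFiniteLimits D] [CartesianMonoidalCategory D] [MonoidalClosed D] :
    HasFiniteLimits C ∧
    (∀ [CartesianMonoidalCategory C], Nonempty (MonoidalClosed C)) ∧
    (∀ [CartesianMonoidalCategory C] (W : C), Closed (G.obj W) → Nonempty (Closed W)) := by
  have := hasFiniteLimits_of_monadic G
  refine ⟨this, fun {_} => ⟨⟨fun W => Closed.ofComonadic G W⟩⟩, fun {_} W _ => ?_⟩
  exact ⟨Closed.ofComonadic G W⟩
end

section
/- Coproducts in the Grothendieck construction: let L : C^op → Cat be a strictly indexed category, ((W_i, w_i))_{i∈I} a family of objects of Σ_C L such that (1) the coproduct ⊔_{i∈I} W_i exists in C with coprojections ι_i, (2) each reindexing functor L(ι_i) has a left adjoint L(ι_i)!, and (3) the coproduct ⊔_{i∈I} L(ι_i)!(w_i) exists in L(⊔ W_i). Then (⊔_{i∈I} W_i, ⊔_{i∈I} L(ι_i)!(w_i)) is the coproduct of the (W_i, w_i) in Σ_C L. -/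
universe w₂ w₁ v u

open CategoryTheory CategoryTheory.Limits Opposite

namespace CHAD

variable {C : Type u} [Category.{v} C]

/-- The total category (Grothendieck construction) `Σ_C L` of a strictly indexed category
`L : Cᵒᵖ ⥤ Cat`. -/
structure Total (L : Cᵒᵖ ⥤ Cat.{w₂, w₁}) where
  base : C
  fib : L.obj (op base)

namespace Total

variable {L : Cᵒᵖ ⥤ Cat.{w₂, w₁}}

/-- A morphism `(W, w) ⟶ (X, x)` in `Σ_C L` is a pair `(f : W ⟶ X, f̄ : w ⟶ L(f)(x))`. -/
structure Hom (X Y : Total L) where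
  base : X.base ⟶ Y.base
  fib : X.fib ⟶ (L.map base.op).toFunctor.obj Y.fib

theorem Hom.ext' {X Y : Total L} (f g : Hom X Y) (w_base : f.base = g.base)
    (w_fib : f.fib ≫ eqToHom (by rw [w_base]) = g.fib) : f = g := by
  cases f; cases g
  dsimp at w_base
  subst w_base
  simpa using w_fib

/-- Identity morphism. -/
def id (X : Total L) : Hom X X where
  base := 𝟙 X.base
  fib := eqToHom (by simp)

/-- Composition of morphisms. -/
def comp {X Y Z : Total L} (f : Hom X Y) (g : Hom Y Z) : Hom X Z where
  base := f.base ≫ g.base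
  fib := f.fib ≫ (L.map f.base.op).toFunctor.map g.fib ≫ eqToHom (by rw [op_comp, Functor.map_comp]; rfl)

attribute [local simp] eqToHom_map

instance : Category (Total L) where
  Hom X Y := Total.Hom X Y
  id X := Total.id X
  comp f g := Total.comp f g
  id_comp f := by
    refine Hom.ext' _ _ (by simp [comp, id]) ?_
    simp [comp, id]
    rw [Functor.congr_hom (congrArg Cat.Hom.toFunctor (L.map_id (op _))) f.fib]
    simp only [Cat.Hom.id_toFunctor, Functor.id_map, eqToHom_trans_assoc, Category.assoc]
    erw [eqToHom_trans, eqToHom_refl, Category.comp_id]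
    exact Category.id_comp _
  comp_id f := by
    refine Hom.ext' _ _ (by simp [comp, id]) ?_
    simp [comp, id]
    erw [eqToHom_trans, eqToHom_refl, Category.comp_id]
  assoc f g h := by
    refine Hom.ext' _ _ (by simp [comp, id]) ?_
    simp [comp, Functor.congr_hom (congrArg Cat.Hom.toFunctor (L.map_comp g.base.op f.base.op)) h.fib]
    erw [eqToHom_trans]

variable (L)

/-- The projection functor `Σ_C L ⥤ C`. -/
def proj : Total L ⥤ C where
  obj X := X.base
  map f := f.base
  map_id _ := rfl
  map_comp _ _ := rfl

end Total

end CHAD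

/-!
Coproducts in the Grothendieck construction: let `L : Cᵒᵖ ⥤ Cat` be a strictly indexed
category and `((W_i, w_i))_{i ∈ I}` a family of objects of `Σ_C L` such that (1) the
coproduct `⊔_i W_i` exists in `C` with coprojections `ι_i`, (2) each reindexing functor
`L(ι_i)` has a left adjoint `L(ι_i)!`, and (3) the coproduct `⊔_i L(ι_i)!(w_i)` exists in
`L(⊔ W_i)`.  Then `(⊔_i W_i, ⊔_i L(ι_i)!(w_i))` is the coproduct of the `(W_i, w_i)`
in `Σ_C L`.
-/

namespace CHAD

open CategoryTheory CategoryTheory.Limits Opposite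

universe w

/-!
The base of a cocone in `Σ_C L` factors uniquely through `⊔ W_i`, say by `b`. Since `L` is
strict, a fibre leg `w_i ⟶ L(ι_i ≫ b)(z)` is a map `w_i ⟶ L(ι_i)(L(b)(z))`, i.e. by
adjunction a map `L(ι_i)!(w_i) ⟶ L(b)(z)`, and these factor uniquely through
`⊔ L(ι_i)!(w_i)`.
-/

section

variable {C : Type u} [Category.{v} C] {L : Cᵒᵖ ⥤ Cat.{w₂, w₁}}

theorem reindex_comp_obj {X Y Z : C} (f : X ⟶ Y) (g : Y ⟶ Z) (z : L.obj (op Z)) :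
    (L.map (f ≫ g).op).toFunctor.obj z =
      (L.map f.op).toFunctor.obj ((L.map g.op).toFunctor.obj z) := by
  rw [op_comp, L.map_comp]; rfl

namespace Total

theorem Hom.ext_of_heq {X Y : Total L} {f g : X ⟶ Y} (h_base : f.base = g.base)
    (h_fib : f.fib ≍ g.fib) : f = g := by
  obtain ⟨fb, ff⟩ := f
  obtain ⟨gb, gf⟩ := g
  dsimp only at h_base h_fib
  subst h_base
  rw [eq_of_heq h_fib]

section AdjointHom

variable {A B : C} {ι : A ⟶ B} {F : L.obj (op A) ⥤ L.obj (op B)}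
  (adj : F ⊣ (L.map ι.op).toFunctor) {w : L.obj (op A)} {x : L.obj (op B)}

def adjointHom (u : F.obj w ⟶ x) : (⟨A, w⟩ : Total L) ⟶ ⟨B, x⟩ :=
  ⟨ι, adj.homEquiv w x u⟩

theorem adjointHom_comp_fib (u : F.obj w ⟶ x) {Z : Total L} (g : (⟨B, x⟩ : Total L) ⟶ Z) :
    Hom.fib (adjointHom adj u ≫ g) ≍ adj.homEquiv w _ (u ≫ g.fib) := by
  rw [Adjunction.homEquiv_naturality_right]
  exact (heq_of_eq (Category.assoc _ _ _).symm).trans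
    (comp_eqToHom_heq (adj.homEquiv w x u ≫ (L.map ι.op).toFunctor.map g.fib) _)

theorem adjointHom_comp_eq (u : F.obj w ⟶ x) {Z : Total L} (g : (⟨B, x⟩ : Total L) ⟶ Z)
    (f : (⟨A, w⟩ : Total L) ⟶ Z) (h_base : ι ≫ g.base = f.base)
    (h_fib : adj.homEquiv w _ (u ≫ g.fib) ≍ f.fib) :
    adjointHom adj u ≫ g = f :=
  Hom.ext_of_heq h_base ((adjointHom_comp_fib adj u g).trans h_fib)

end AdjointHom

section Coproduct

variable {I : Type w} {W : I → Total L} {c : Cofan fun i => (W i).base} (hc : IsColimit c)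
  {F : ∀ i, L.obj (op (W i).base) ⥤ L.obj (op c.pt)}
  (adj : ∀ i, F i ⊣ (L.map (c.inj i).op).toFunctor)
  {d : Cofan fun i => (F i).obj (W i).fib} (hd : IsColimit d)

include hc hd in
theorem hom_ext_of_isColimit {Z : Total L} {m m' : (⟨c.pt, d.pt⟩ : Total L) ⟶ Z}
    (h : ∀ i, adjointHom (adj i) (d.inj i) ≫ m = adjointHom (adj i) (d.inj i) ≫ m') :
    m = m' := by
  have h_base : m.base = m'.base :=
    Cofan.IsColimit.hom_ext hc _ _ fun i => congrArg Hom.base (h i)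
  obtain ⟨b, g⟩ := m
  obtain ⟨b', g'⟩ := m'
  dsimp only at h_base
  subst h_base
  congr 1
  refine Cofan.IsColimit.hom_ext hd _ _ fun i => (adj i).homEquiv _ _ |>.injective ?_
  exact eq_of_heq <| (adjointHom_comp_fib _ _ _).symm.trans <|
    (congr_arg_heq Hom.fib (h i)).trans (adjointHom_comp_fib _ _ _)

def cofanDescBase (s : Cofan W) : c.pt ⟶ s.pt.base :=
  Cofan.IsColimit.desc hc fun i => (s.inj i).base

theorem reindex_inj_cofanDescBase_obj (s : Cofan W) (i : I) :
    (L.map (s.inj i).base.op).toFunctor.obj s.pt.fib =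
      (L.map (c.inj i).op).toFunctor.obj
        ((L.map (cofanDescBase hc s).op).toFunctor.obj s.pt.fib) := by
  rw [← reindex_comp_obj, cofanDescBase, Cofan.IsColimit.fac]

def cofanDescFib (s : Cofan W) : d.pt ⟶ (L.map (cofanDescBase hc s).op).toFunctor.obj s.pt.fib :=
  Cofan.IsColimit.desc hd fun i => ((adj i).homEquiv _ _).symm <|
    (s.inj i).fib ≫ eqToHom (reindex_inj_cofanDescBase_obj hc s i)

def cofanDesc (s : Cofan W) : (⟨c.pt, d.pt⟩ : Total L) ⟶ s.pt :=
  ⟨cofanDescBase hc s, cofanDescFib hc adj hd s⟩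

theorem adjointHom_comp_cofanDesc (s : Cofan W) (i : I) :
    adjointHom (adj i) (d.inj i) ≫ cofanDesc hc adj hd s = s.inj i := by
  refine adjointHom_comp_eq _ _ _ _ (Cofan.IsColimit.fac hc _ i) ?_
  have h_leg : d.inj i ≫ cofanDescFib hc adj hd s = _ := Cofan.IsColimit.fac hd _ i
  rw [cofanDesc, h_leg, Equiv.apply_symm_apply]
  exact comp_eqToHom_heq _ _

def isColimitCofanAdjointHom :
    IsColimit (Cofan.mk (⟨c.pt, d.pt⟩ : Total L) fun i => adjointHom (adj i) (d.inj i)) :=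
  Cofan.IsColimit.mk _ (cofanDesc hc adj hd) (adjointHom_comp_cofanDesc hc adj hd)
    fun s _ hm => hom_ext_of_isColimit hc adj hd fun i =>
      (hm i).trans (adjointHom_comp_cofanDesc hc adj hd s i).symm

end Coproduct

end Total

end

theorem coproducts_in_total_category
    {C : Type u} [Category.{v} C] (L : Cᵒᵖ ⥤ Cat.{w₂, w₁})
    {I : Type w} (Wfam : I → Total L)
    -- (1) the coproduct of the bases exists in `C`, with coprojections `c.inj i`
    (c : Cofan (fun i => (Wfam i).base)) (hc : IsColimit c)
    -- (2) each reindexing functor `L(ι_i)` has a left adjoint `Fi i`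
    (Fi : ∀ i : I, (L.obj (op ((Wfam i).base))) ⥤ (L.obj (op c.pt)))
    (adj : ∀ i : I, Fi i ⊣ ((L.map (c.inj i).op).toFunctor : L.obj (op c.pt) ⥤ L.obj (op ((Wfam i).base))))
    -- (3) the coproduct of the pushforwards of the fibre components exists in `L(⊔ W_i)`
    (d : Cofan (fun i => (Fi i).obj (Wfam i).fib)) (hd : IsColimit d) :
    Nonempty (IsColimit (Cofan.mk (⟨c.pt, d.pt⟩ : Total L)
      (fun i => (⟨c.inj i,
        (adj i).unit.app (Wfam i).fib ≫ (L.map (c.inj i).op).toFunctor.map (d.inj i)⟩ :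
          Wfam i ⟶ ⟨c.pt, d.pt⟩)))) :=
  -- `Adjunction.homEquiv` is `unit ≫ map` by definition, so these are the same cofan.
  ⟨Total.isColimitCofanAdjointHom hc adj hd⟩

end CHAD
end

section
/- Let L : C^op → Cat be an extensive strictly indexed category (i.e., for each W, X the canonical functor (L(ι_W), L(ι_X)) : L(W ⊔ X) → L(W) × L(X) is an isomorphism), and suppose each fibre L(X) has an initial object 0. Then for any W, X in C there is an adjunction ε^{(W,X)} ∘ (id_{L(W)}, 0) ⊣ L(ι_W) : L(W ⊔ X) → L(W), where ε^{(W,X)} is the inverse of the extensivity isomorphism and 0 : L(W) → L(X) is the constant functor at the initial object. -/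
universe w₂ w₁ v u

open CategoryTheory CategoryTheory.Limits Opposite

noncomputable def prod'ConstInitialAdjFst (A : Type*) [Category A] (B : Type*) [Category B]
    [HasInitial B] :
    Functor.prod' (𝟭 A) ((Functor.const A).obj (⊥_ B)) ⊣ CategoryTheory.Prod.fst A B :=
  Adjunction.mkOfHomEquiv
    { homEquiv := fun _ p =>
        { toFun := fun f => f.1
          invFun := fun g => (g, initial.to p.2)
          left_inv := fun _ => Prod.ext rfl (initial.hom_ext _ _)
          right_inv := fun _ => rfl }
      homEquiv_naturality_left_symm := fun _ _ => Prod.ext rfl (initial.hom_ext _ _) }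

theorem extensive_indexed_category_coprojection_adjunction
    {C : Type u} [Category.{v} C] [HasBinaryCoproducts C] (L : Cᵒᵖ ⥤ Cat.{w₂, w₁})
    [∀ X : Cᵒᵖ, HasInitial (L.obj X)]
    -- extensivity: `ε W X` is a (strict) inverse to the canonical pairing functor
    (ε : ∀ W X : C, (↑(L.obj (op W)) × ↑(L.obj (op X))) ⥤ L.obj (op (W ⨿ X)))
    (hε₁ : ∀ W X : C, ε W X ⋙
      Functor.prod' (L.map (coprod.inl : W ⟶ W ⨿ X).op).toFunctor (L.map (coprod.inr : X ⟶ W ⨿ X).op).toFunctor =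
        𝟭 (↑(L.obj (op W)) × ↑(L.obj (op X))))
    (hε₂ : ∀ W X : C,
      Functor.prod' (L.map (coprod.inl : W ⟶ W ⨿ X).op).toFunctor (L.map (coprod.inr : X ⟶ W ⨿ X).op).toFunctor
        ⋙ ε W X = 𝟭 (L.obj (op (W ⨿ X)))) :
    ∀ W X : C,
      Nonempty ((Functor.prod' (𝟭 (L.obj (op W)))
          ((Functor.const (L.obj (op W))).obj (⊥_ (L.obj (op X)))) ⋙ ε W X) ⊣
        ((L.map (coprod.inl : W ⟶ W ⨿ X).op).toFunctor : L.obj (op (W ⨿ X)) ⥤ L.obj (op W))) := by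
  intro W X
  let extensivity : (↑(L.obj (op W)) × ↑(L.obj (op X))) ≌ L.obj (op (W ⨿ X)) :=
    CategoryTheory.Equivalence.mk (ε W X) _ (eqToIso (hε₁ W X).symm) (eqToIso (hε₂ W X))
  -- the composite right adjoint `Functor.prod' _ _ ⋙ Prod.fst` is `L.map coprod.inl.op` on the nose
  exact ⟨(prod'ConstInitialAdjFst _ _).comp extensivity.toAdjunction⟩
end

section
/- For a category C, an object W of Cat that is not the initial (empty) category satisfies the following equivalent conditions: (i) the unique functor W → 1 is an equivalence; (ii) the projection π : W × W → W is an equivalence; (iii) the identity functor on W is naturally isomorphic to a constant functor; (iv) any two functors f, g : X → W are naturally isomorphic (W is pseudo-preterminal). -/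
/-!
If `η : 𝟭 W ≅ const c`, naturality of `η` forces every morphism `x ⟶ y` to be
`η.hom.app x ≫ η.inv.app y`, so every hom-set of `W` is a singleton; then `W ⥤ 1` and
`W × W ⥤ W` are full, faithful and (as `W` is nonempty) essentially surjective.
Conversely, whiskering with an equivalence reflects isomorphisms of functors: `f ⋙ star` and
`g ⋙ star` always agree, and so do the first projections of `f.prod' f` and `f.prod' g`,
whose second projections are `f` and `g`.
-/

universe v u

open CategoryTheory CategoryTheory.Limits

namespace CategoryTheory

variable {W : Type u} [Category.{v} W]

lemma Functor.nonempty_iso_of_comp_iso {C : Type*} [Category* C] {E : Type*} [Category* E]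
    (F : W ⥤ E) [F.Full] [F.Faithful] {f g : C ⥤ W} (e : f ⋙ F ≅ g ⋙ F) :
    Nonempty (f ≅ g) :=
  ⟨((Functor.FullyFaithful.ofFullyFaithful F).whiskeringRight C).preimageIso e⟩

lemma nonempty_hom_of_iso_const {c : W} (η : 𝟭 W ≅ (Functor.const W).obj c) (x y : W) :
    Nonempty (x ⟶ y) :=
  ⟨η.hom.app x ≫ η.inv.app y⟩

lemma isThin_of_iso_const {c : W} (η : 𝟭 W ≅ (Functor.const W).obj c) : Quiver.IsThin W :=
  fun x y => ⟨fun f g => by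
    have hf := η.hom.naturality f
    have hg := η.hom.naturality g
    simp only [Functor.id_map, Functor.const_obj_map] at hf hg
    rw [← cancel_mono (η.hom.app y), hf, hg]⟩

lemma isEquivalence_star_of_isThin [Quiver.IsThin W] [Nonempty W]
    (hom_nonempty : ∀ x y : W, Nonempty (x ⟶ y)) :
    (Functor.star W).IsEquivalence where
  full := ⟨fun {x y} _ => ⟨(hom_nonempty x y).some, rfl⟩⟩
  faithful := ⟨fun _ => Subsingleton.elim _ _⟩
  essSurj := ⟨fun _ => ⟨Classical.arbitrary W, ⟨eqToIso (Subsingleton.elim _ _)⟩⟩⟩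

lemma isEquivalence_fst_of_isThin [Quiver.IsThin W]
    (hom_nonempty : ∀ x y : W, Nonempty (x ⟶ y)) : (Prod.fst W W).IsEquivalence where
  full := ⟨fun {x y} f => ⟨(f, (hom_nonempty x.2 y.2).some), rfl⟩⟩
  faithful := ⟨fun {_ _ _ _} h => Prod.ext h (Subsingleton.elim _ _)⟩
  essSurj := ⟨fun x => ⟨(x, x), ⟨Iso.refl x⟩⟩⟩

lemma nonempty_iso_of_isEquivalence_star {X : Type*} [Category* X]
    [(Functor.star W).IsEquivalence] (f g : X ⥤ W) : Nonempty (f ≅ g) :=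
  (Functor.star W).nonempty_iso_of_comp_iso (Functor.punitExt _ _)

lemma nonempty_iso_of_isEquivalence_fst {X : Type*} [Category* X]
    [(Prod.fst W W).IsEquivalence] (f g : X ⥤ W) : Nonempty (f ≅ g) := by
  obtain ⟨e⟩ := (Prod.fst W W).nonempty_iso_of_comp_iso
    (f := f.prod' f) (g := f.prod' g) (Iso.refl f)
  exact ⟨Functor.isoWhiskerRight e (Prod.snd W W)⟩

end CategoryTheory

theorem pseudo_preterminal_objects_in_Cat
    (W : Type u) [Category.{v} W] (hW : Nonempty W) :
    ((Functor.star W).IsEquivalence ↔ (CategoryTheory.Prod.fst W W).IsEquivalence) ∧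
    ((CategoryTheory.Prod.fst W W).IsEquivalence ↔
      ∃ c : W, Nonempty (𝟭 W ≅ (Functor.const W).obj c)) ∧
    ((∃ c : W, Nonempty (𝟭 W ≅ (Functor.const W).obj c)) ↔
      ∀ (X : Type u) [Category.{v} X] (f g : X ⥤ W), Nonempty (f ≅ g)) := by
  have const_of_pseudo (h : ∀ (X : Type u) [Category.{v} X] (f g : X ⥤ W), Nonempty (f ≅ g)) :
      ∃ c : W, Nonempty (𝟭 W ≅ (Functor.const W).obj c) :=
    ⟨hW.some, h W _ _⟩
  have equiv_of_const : (∃ c : W, Nonempty (𝟭 W ≅ (Functor.const W).obj c)) →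
      (Functor.star W).IsEquivalence ∧ (CategoryTheory.Prod.fst W W).IsEquivalence := by
    rintro ⟨c, ⟨η⟩⟩
    have := isThin_of_iso_const η
    exact ⟨isEquivalence_star_of_isThin (nonempty_hom_of_iso_const η),
      isEquivalence_fst_of_isThin (nonempty_hom_of_iso_const η)⟩
  have pseudo_of_star (_ : (Functor.star W).IsEquivalence) (X : Type u) [Category.{v} X]
      (f g : X ⥤ W) : Nonempty (f ≅ g) :=
    nonempty_iso_of_isEquivalence_star f g
  have pseudo_of_fst (_ : (CategoryTheory.Prod.fst W W).IsEquivalence) (X : Type u)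
      [Category.{v} X] (f g : X ⥤ W) : Nonempty (f ≅ g) :=
    nonempty_iso_of_isEquivalence_fst f g
  exact ⟨⟨fun h => (equiv_of_const (const_of_pseudo (pseudo_of_star h))).2,
      fun h => (equiv_of_const (const_of_pseudo (pseudo_of_fst h))).1⟩,
    ⟨fun h => const_of_pseudo (pseudo_of_fst h), fun h => (equiv_of_const h).2⟩,
    ⟨fun h => pseudo_of_star (equiv_of_const h).1, const_of_pseudo⟩⟩
end
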